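/- arXiv:1510.05276 — 3 statements merged into one kernel-verified Lean document; each statement's English description precedes it below -/
import Mathlib

section
/- Let 𝕋 = {−2k : k ∈ ℕ} ∪ {2k + 1 : k ∈ ℕ} ⊆ ℝ, and let S ⊆ 𝕋 be unbounded above and unbounded below. If τ is a positive odd integer, then S is not a subset of S + τ. -/
/-! Pick `x ∈ S` with `x > τ`. Being positive, `x` is odd, and if `x = s + τ` with `s ∈ S` then
`s > 0` is odd as well; but then `x = s + τ` is a sum of two odd integers, hence even. -/

lemma exists_odd_int_eq_of_pos {x : ℝ}
    (hx : (∃ k : ℕ, x = -(2 * k)) ∨ ∃ k : ℕ, x = 2 * k + 1) (hpos : 0 < x) :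
    ∃ n : ℤ, Odd n ∧ (n : ℝ) = x := by
  obtain ⟨k, rfl⟩ | ⟨k, rfl⟩ := hx
  · have : (0 : ℝ) ≤ 2 * k := by positivity
    linarith
  · exact ⟨2 * k + 1, odd_two_mul_add_one _, by push_cast; ring⟩

lemma odd_int_cast_ne_add {a b c : ℤ} (ha : Odd a) (hb : Odd b) (hc : Odd c) :
    (a : ℝ) ≠ b + c := by
  intro h
  have hsum : a = b + c := by exact_mod_cast h
  exact Int.not_even_iff_odd.2 ha (hsum ▸ hb.add_odd hc)

theorem stmt_12_general
    (T : Set ℝ) (hT : T = {x : ℝ | (∃ k : ℕ, x = -(2 * k)) ∨ (∃ k : ℕ, x = 2 * k + 1)})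
    (S : Set ℝ) (hS : S ⊆ T) (hAbove : ¬ BddAbove S)
    (τ : ℝ) (hτ : ∃ m : ℤ, 0 < τ ∧ τ = 2 * m + 1) :
    ¬ S ⊆ {y : ℝ | ∃ s ∈ S, y = s + τ} := by
  intro hshift
  subst hT
  obtain ⟨m, hτpos, rfl⟩ := hτ
  obtain ⟨x, hxS, hτx⟩ := not_bddAbove_iff.1 hAbove (2 * m + 1)
  obtain ⟨s, hsS, rfl⟩ := hshift hxS
  obtain ⟨a, ha, hax⟩ := exists_odd_int_eq_of_pos (hS hxS) (by linarith)
  obtain ⟨b, hb, rfl⟩ := exists_odd_int_eq_of_pos (hS hsS) (by linarith)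
  exact odd_int_cast_ne_add ha hb (odd_two_mul_add_one m) (by rw [hax]; push_cast; ring)

theorem stmt_12
    (T : Set ℝ) (hT : T = {x : ℝ | (∃ k : ℕ, x = -(2 * k)) ∨ (∃ k : ℕ, x = 2 * k + 1)})
    (S : Set ℝ) (hS : S ⊆ T) (hAbove : ¬ BddAbove S) (hBelow : ¬ BddBelow S)
    (τ : ℝ) (hτ : ∃ m : ℤ, 0 < τ ∧ τ = 2 * m + 1) :
    ¬ S ⊆ {y : ℝ | ∃ s ∈ S, y = s + τ} :=
  stmt_12_general T hT S hS hAbove τ hτ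
end

section
/- Let 𝕋 = {−2k : k ∈ ℕ} ∪ {2k + 1 : k ∈ ℕ} ⊆ ℝ. Then for every nonempty subset S ⊆ 𝕋 and every real number τ ≠ 0, S + τ ≠ S. In other words, 𝕋 contains no nonempty sub-time-scale that is invariant under a nonzero translation. -/
/-!
Every element of 𝕋 is an integer that is even exactly when it is nonpositive. If `S + τ = S`, then
`S` is invariant under translation by every integer multiple of `τ`; as `s` and `s + τ` lie in 𝕋,
`τ` is a nonzero integer `t`. The points `s ± 2t²(|s| + 1)` of `S` then share the parity of `s` but
have opposite signs, which 𝕋 does not allow.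
-/

open Pointwise

theorem add_zsmul_mem_of_setOf_add_eq {G : Type*} [AddCommGroup G] {S : Set G} {τ : G}
    (h : {y : G | ∃ s ∈ S, y = s + τ} = S) {s : G} (hs : s ∈ S) (n : ℤ) : s + n • τ ∈ S := by
  have hτ : τ ∈ AddAction.stabilizer G S := by
    rw [AddAction.mem_stabilizer_iff]
    conv_rhs => rw [← h]
    ext y
    simp [Set.mem_vadd_set, add_comm, eq_comm]
  have hnτ := AddAction.mem_stabilizer_iff.mp ((AddAction.stabilizer G S).zsmul_mem hτ n)
  rw [add_comm, ← hnτ]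
  exact Set.vadd_mem_vadd_set hs

theorem exists_int_even_iff_nonpos {x : ℝ}
    (hx : (∃ k : ℕ, x = -(2 * k)) ∨ (∃ k : ℕ, x = 2 * k + 1)) :
    ∃ m : ℤ, x = m ∧ (Even m ↔ m ≤ 0) := by
  rcases hx with ⟨k, rfl⟩ | ⟨k, rfl⟩
  · exact ⟨-(2 * k), by push_cast; ring, ⟨fun _ => by omega, fun _ => ⟨-k, by ring⟩⟩⟩
  · refine ⟨2 * k + 1, by push_cast; ring, ⟨fun h => absurd h ?_, fun h => by omega⟩⟩
    exact Int.not_even_iff_odd.mpr ⟨k, rfl⟩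

theorem Int.not_forall_even_add_mul_iff_nonpos (a t : ℤ) (ht : t ≠ 0) :
    ¬ ∀ n : ℤ, (Even (a + n * t) ↔ a + n * t ≤ 0) := by
  intro h
  set j := t * t * (|a| + 1)
  have hj : |a| + 1 ≤ j := le_mul_of_one_le_left (by positivity) (mul_self_pos.mpr ht)
  have hfwd := h (2 * t * (|a| + 1))
  have hbwd := h (-(2 * t * (|a| + 1)))
  have h2j : Even (2 * j) := even_two_mul j
  rw [show 2 * t * (|a| + 1) * t = 2 * j by ring, Int.even_add, iff_true_intro h2j, iff_true]
    at hfwd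
  rw [show -(2 * t * (|a| + 1)) * t = -(2 * j) by ring, Int.even_add, even_neg, iff_true_intro h2j,
    iff_true] at hbwd
  have hpos : ¬ a + 2 * j ≤ 0 := by linarith [neg_le_abs a, abs_nonneg a]
  have hneg : a + -(2 * j) ≤ 0 := by linarith [le_abs_self a]
  exact hpos (hfwd.mp (hbwd.mpr hneg))

theorem stmt_13
    (T : Set ℝ) (hT : T = {x : ℝ | (∃ k : ℕ, x = -(2 * k)) ∨ (∃ k : ℕ, x = 2 * k + 1)}) :
    ∀ S : Set ℝ, S ⊆ T → S.Nonempty → ∀ τ : ℝ, τ ≠ 0 →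
      {y : ℝ | ∃ s ∈ S, y = s + τ} ≠ S := by
  intro S hST ⟨s, hs⟩ τ hτ hS
  subst hT
  have mem_int (x : ℝ) (hx : x ∈ S) : ∃ m : ℤ, x = m ∧ (Even m ↔ m ≤ 0) :=
    exists_int_even_iff_nonpos (hST hx)
  obtain ⟨a, rfl, -⟩ := mem_int s hs
  obtain ⟨b, hb, -⟩ := mem_int _ (add_zsmul_mem_of_setOf_add_eq hS hs 1)
  obtain rfl : τ = ((b - a : ℤ) : ℝ) := by push_cast; rw [← hb]; simp
  refine Int.not_forall_even_add_mul_iff_nonpos a (b - a) (by exact_mod_cast hτ) fun n => ?_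
  obtain ⟨m, hm, hpar⟩ := mem_int _ (add_zsmul_mem_of_setOf_add_eq hS hs n)
  have : (m : ℝ) = ((a + n * (b - a) : ℤ) : ℝ) := by rw [← hm, zsmul_eq_mul]; push_cast; ring
  rwa [Int.cast_inj.mp this] at hpar
end

section
/- There exists a closed subset 𝕋 of ℝ that is unbounded above and below, has uniformly bounded forward gaps (∀ t ∈ 𝕋, ∃ s ∈ 𝕋, t < s ≤ t + 5), and such that no nonempty subset S ⊆ 𝕋 satisfies S + τ = S for some nonzero real τ. -/
/-!
Take 𝕋 to be the integers that are odd exactly when they are positive, i.e. {−2k} ∪ {2k + 1}.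
A nonempty S ⊆ 𝕋 with S + τ = S contains an integer n₀ and, being invariant under every
integer multiple of τ, the whole progression n₀ + ℤτ; so τ = m is a nonzero integer.
The points n₀ ± 2qm with q large lie on opposite sides of 0, hence have opposite parities,
yet both have the parity of n₀.
-/

open Set Pointwise

section Translation

variable {G : Type*} [AddCommGroup G]

theorem setOf_add_eq_vadd_set (S : Set G) (τ : G) : {y | ∃ s ∈ S, y = s + τ} = τ +ᵥ S := by
  ext y
  simp [mem_vadd_set, add_comm, eq_comm]

theorem zsmul_vadd_mem_of_vadd_set_eq {S : Set G} {τ : G} (h : τ +ᵥ S = S) (k : ℤ) {s : G}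
    (hs : s ∈ S) : k • τ + s ∈ S := by
  have hk : k • τ +ᵥ S = S :=
    AddAction.mem_stabilizer_iff.1 <| AddSubgroup.zsmul_mem _ (AddAction.mem_stabilizer_iff.2 h) k
  simpa [hk] using vadd_mem_vadd_set (a := k • τ) hs

end Translation

theorem not_bddAbove_intCast_image {A : Set ℤ} (h : ¬ BddAbove A) :
    ¬ BddAbove (((↑) : ℤ → ℝ) '' A) := by
  rintro ⟨x, hx⟩
  exact h ⟨⌊x⌋, fun n hn => Int.le_floor.2 (hx (mem_image_of_mem _ hn))⟩

theorem not_bddBelow_intCast_image {A : Set ℤ} (h : ¬ BddBelow A) :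
    ¬ BddBelow (((↑) : ℤ → ℝ) '' A) := by
  rintro ⟨x, hx⟩
  exact h ⟨⌈x⌉, fun n hn => Int.ceil_le.2 (hx (mem_image_of_mem _ hn))⟩

def oddIffPos : Set ℤ := {n | Odd n ↔ 0 < n}

theorem mem_oddIffPos {n : ℤ} : n ∈ oddIffPos ↔ (n % 2 = 1 ↔ 0 < n) := by
  rw [← Int.odd_iff]
  rfl

theorem not_bddAbove_oddIffPos : ¬ BddAbove oddIffPos := by
  refine not_bddAbove_iff.2 fun x => ⟨2 * x.toNat + 1, ?_, by omega⟩
  rw [mem_oddIffPos]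
  omega

theorem not_bddBelow_oddIffPos : ¬ BddBelow oddIffPos := by
  refine not_bddBelow_iff.2 fun x => ⟨-2 * (-x).toNat - 2, ?_, by omega⟩
  rw [mem_oddIffPos]
  omega

theorem exists_mem_oddIffPos_lt_le_add_two {n : ℤ} (hn : n ∈ oddIffPos) :
    ∃ m ∈ oddIffPos, n < m ∧ m ≤ n + 2 := by
  rw [mem_oddIffPos] at hn
  by_cases h0 : n = 0
  · exact ⟨1, by rw [mem_oddIffPos]; omega, by omega, by omega⟩
  · exact ⟨n + 2, by rw [mem_oddIffPos]; omega, by omega, by omega⟩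

theorem not_forall_add_mul_mem_oddIffPos (n₀ : ℤ) {m : ℤ} (hm : m ≠ 0) :
    ¬ ∀ k : ℤ, n₀ + k * m ∈ oddIffPos := by
  intro h
  set q := m * m * (|n₀| + 1)
  have hq : |n₀| < q := by
    have : 0 < m * m := mul_self_pos.2 hm
    nlinarith [abs_nonneg n₀]
  have hpos := h (2 * m * (|n₀| + 1))
  have hneg := h (-(2 * m * (|n₀| + 1)))
  rw [show n₀ + 2 * m * (|n₀| + 1) * m = n₀ + 2 * q by ring, mem_oddIffPos] at hpos
  rw [show n₀ + -(2 * m * (|n₀| + 1)) * m = n₀ - 2 * q by ring, mem_oddIffPos] at hneg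
  have := abs_lt.1 hq
  omega

theorem exists_add_mul_mem_of_vadd_set_eq {A : Set ℤ} {S : Set ℝ} (hSA : S ⊆ ((↑) : ℤ → ℝ) '' A)
    (hS : S.Nonempty) {τ : ℝ} (hτ : τ ≠ 0) (hτS : τ +ᵥ S = S) :
    ∃ n₀ m : ℤ, m ≠ 0 ∧ ∀ k : ℤ, n₀ + k * m ∈ A := by
  obtain ⟨s₀, hs₀⟩ := hS
  have hmem k := hSA (zsmul_vadd_mem_of_vadd_set_eq hτS k hs₀)
  obtain ⟨n₀, -, rfl⟩ := hSA hs₀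
  obtain ⟨n₁, -, hn₁⟩ := hmem 1
  obtain rfl : τ = ((n₁ - n₀ : ℤ) : ℝ) := by
    push_cast
    linarith [one_zsmul τ]
  refine ⟨n₀, n₁ - n₀, fun h => hτ (by simp [h]), fun k => ?_⟩
  obtain ⟨n, hn, hnk⟩ := hmem k
  have : (n : ℝ) = ((n₀ + k * (n₁ - n₀) : ℤ) : ℝ) := by
    rw [hnk, zsmul_eq_mul]
    push_cast
    ring
  exact Int.cast_injective this ▸ hn

theorem stmt_14 :
    ∃ T : Set ℝ, IsClosed T ∧ ¬ BddAbove T ∧ ¬ BddBelow T ∧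
      (∀ t ∈ T, ∃ s ∈ T, t < s ∧ s ≤ t + 5) ∧
      ¬ ∃ S : Set ℝ, S ⊆ T ∧ S.Nonempty ∧ ∃ τ : ℝ, τ ≠ 0 ∧
          {y : ℝ | ∃ s ∈ S, y = s + τ} = S := by
  refine ⟨(↑) '' oddIffPos, Int.isClosedEmbedding_coe_real.isClosedMap _ (isClosed_discrete _),
    not_bddAbove_intCast_image not_bddAbove_oddIffPos,
    not_bddBelow_intCast_image not_bddBelow_oddIffPos, ?_, ?_⟩
  · rintro _ ⟨n, hn, rfl⟩
    obtain ⟨m, hm, hnm, hmn⟩ := exists_mem_oddIffPos_lt_le_add_two hn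
    refine ⟨m, mem_image_of_mem _ hm, by exact_mod_cast hnm, ?_⟩
    have : (m : ℝ) ≤ n + 2 := by exact_mod_cast hmn
    linarith
  · rintro ⟨S, hST, hS, τ, hτ, hτS⟩
    rw [setOf_add_eq_vadd_set] at hτS
    obtain ⟨n₀, m, hm, hprog⟩ := exists_add_mul_mem_of_vadd_set_eq hST hS hτ hτS
    exact not_forall_add_mul_mem_oddIffPos n₀ hm hprog
end
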